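/- Let f(x) = |x|²/4 on ℝⁿ. Suppose v : ℝⁿ → ℝ is smooth, v, ∇v, and Hess v all lie in the weighted L² space with respect to e^{-f}dx, ℒv = −μv for some μ ∈ ℝ, and ∫v²e^{-f}dx = 1. Then ∫|∇v|²e^{-f}dx = μ and ∫|Hess v|²e^{-f}dx = μ(μ − 1/2). In particular, no such eigenfunction exists for μ ∈ (0, 1/2). -/

import Mathlib

open MeasureTheory Real

noncomputable section

/-- Euclidean space `ℝⁿ`. -/
abbrev En (n : ℕ) := EuclideanSpace ℝ (Fin n)

variable {n : ℕ}

/-- Partial derivative `∂_i u` in the `i`-th coordinate direction. -/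
def pd (i : Fin n) (u : En n → ℝ) (x : En n) : ℝ :=
  fderiv ℝ u x (EuclideanSpace.single i 1)

/-- Euclidean Laplacian `Δu = Σ_i ∂_i∂_i u`. -/
def lap (u : En n → ℝ) (x : En n) : ℝ := ∑ i, pd i (pd i u) x

/-- The drift Laplacian `ℒu = Δu − ⟨x/2, ∇u⟩` for the potential `f(x) = |x|²/4`. -/
def driftLap (u : En n → ℝ) (x : En n) : ℝ :=
  lap u x - ∑ i, (x i / 2) * pd i u x

/-- The drift Laplacian acting componentwise on vector fields. -/
def driftLapV (Y : En n → Fin n → ℝ) (x : En n) (i : Fin n) : ℝ :=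
  driftLap (fun y => Y y i) x

/-- The gradient `∇u` as a vector field. -/
def gradV (u : En n → ℝ) (x : En n) (i : Fin n) : ℝ := pd i u x

/-- The weighted divergence `div_f Y = div Y − ⟨Y, x/2⟩` for `f(x) = |x|²/4`. -/
def divf (Y : En n → Fin n → ℝ) (x : En n) : ℝ :=
  ∑ i, (pd i (fun y => Y y i) x - Y x i * (x i / 2))

/-- `div_f* Y`, the symmetric 2-tensor `(div_f* Y)_{ij} = −(∂_i Y_j + ∂_j Y_i)/2`. -/
def divfStar (Y : En n → Fin n → ℝ) (x : En n) (i j : Fin n) : ℝ :=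
  -(pd i (fun y => Y y j) x + pd j (fun y => Y y i) x) / 2

/-- The weighted divergence of a matrix-valued map:
`(div_f h)_i = Σ_j (∂_j h_{ij} − (x_j/2) h_{ij})`. -/
def divfT (h : En n → Fin n → Fin n → ℝ) (x : En n) (i : Fin n) : ℝ :=
  ∑ j, (pd j (fun y => h y i j) x - (x j / 2) * h x i j)

/-- The operator `𝒫 = div_f ∘ div_f*` on vector fields. -/
def Pop (Y : En n → Fin n → ℝ) : En n → Fin n → ℝ := divfT (divfStar Y)

/-- The Hessian matrix `(Hess u)_{ij} = ∂_i ∂_j u`. -/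
def hess (u : En n → ℝ) (x : En n) (i j : Fin n) : ℝ := pd i (pd j u) x

/-- The Gaussian weight `e^{-f(x)} = e^{-|x|²/4}`. -/
def gw (x : En n) : ℝ := Real.exp (-(‖x‖ ^ 2 / 4))

open Set

-- helper lemmas
lemma pd_contDiff (i : Fin n) {u : En n → ℝ} (hu : ContDiff ℝ (⊤ : ℕ∞) u) :
    ContDiff ℝ (⊤ : ℕ∞) (pd i u) :=
  (hu.fderiv_right (by simp)).clm_apply contDiff_const

lemma pd_mul (i : Fin n) {a b : En n → ℝ} (ha : Differentiable ℝ a) (hb : Differentiable ℝ b)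
    (x : En n) : pd i (fun y => a y * b y) x = pd i a x * b x + a x * pd i b x := by
  unfold pd
  rw [fderiv_fun_mul (ha x) (hb x)]
  simp [mul_comm]
  ring

lemma pd_sum (i : Fin n) {ι : Type*} (s : Finset ι) {F : ι → En n → ℝ}
    (hF : ∀ j, Differentiable ℝ (F j)) (x : En n) :
    pd i (fun y => ∑ j ∈ s, F j y) x = ∑ j ∈ s, pd i (F j) x := by
  unfold pd
  rw [fderiv_fun_sum (fun j _ => (hF j) x)]
  simp

lemma norm_sq_eq (x : En n) : ‖x‖ ^ 2 = ∑ i, (x i) ^ 2 := by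
  rw [EuclideanSpace.norm_eq, Real.sq_sqrt (by positivity)]
  simp [sq_abs]

lemma coord_contDiff (j : Fin n) : ContDiff ℝ (⊤ : ℕ∞) (fun y : En n => y j) :=
  (EuclideanSpace.proj (𝕜 := ℝ) j).contDiff

lemma pd_coord (i j : Fin n) (x : En n) :
    pd i (fun y : En n => y j) x = if i = j then 1 else 0 := by
  unfold pd
  have : (fun y : En n => y j) = ⇑(EuclideanSpace.proj (𝕜 := ℝ) j) := rfl
  rw [this, ContinuousLinearMap.fderiv]
  show (EuclideanSpace.single i (1:ℝ)) j = if i = j then 1 else 0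
  rw [EuclideanSpace.single_apply]
  by_cases h : i = j <;> simp [h, eq_comm]

lemma gw_contDiff : ContDiff ℝ (⊤ : ℕ∞) (gw (n := n)) := by
  unfold gw
  apply Real.contDiff_exp.comp
  apply ContDiff.neg
  apply ContDiff.div_const
  have : (fun x : En n => ‖x‖ ^ 2) = fun x : En n => ∑ i, (x i) ^ 2 := by
    funext x; exact norm_sq_eq x
  rw [this]
  exact ContDiff.sum fun i _ => (coord_contDiff i).pow 2

lemma pd_normsq (i : Fin n) (x : En n) :
    pd i (fun y : En n => ∑ j, (y j) ^ 2) x = 2 * x i := by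
  rw [pd_sum i Finset.univ (fun j => ((coord_contDiff j).differentiable (by simp)).fun_pow 2) x]
  have : ∀ j : Fin n, pd i (fun y : En n => (y j) ^ 2) x
      = (if i = j then 1 else 0) * x j + x j * (if i = j then 1 else 0) := by
    intro j
    have hmul := pd_mul i (a := fun y : En n => y j) (b := fun y : En n => y j)
      ((coord_contDiff j).differentiable (by simp)) ((coord_contDiff j).differentiable (by simp)) x
    have : (fun y : En n => (y j) ^ 2) = fun y : En n => y j * y j := by
      funext y; ring
    rw [this, hmul, pd_coord]
  simp only [this]
  simp [Finset.sum_ite_eq, two_mul, Finset.sum_add_distrib]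

lemma gw_eq_exp : (gw (n := n)) = fun y => Real.exp ((-1/4) * ∑ j, (y j) ^ 2) := by
  funext y; unfold gw; rw [norm_sq_eq]; ring_nf

lemma pd_gw (i : Fin n) (x : En n) : pd i gw x = -(x i / 2) * gw x := by
  have hdg : DifferentiableAt ℝ (fun y : En n => (-1/4 : ℝ) * ∑ j, (y j) ^ 2) x := by
    apply DifferentiableAt.const_mul
    exact (Differentiable.fun_sum fun j _ => ((coord_contDiff j).differentiable (by simp)).fun_pow 2) x
  rw [gw_eq_exp]
  unfold pd
  rw [fderiv_exp hdg]
  simp only [ContinuousLinearMap.coe_smul', Pi.smul_apply, smul_eq_mul]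
  have h2 : fderiv ℝ (fun y : En n => (-1/4 : ℝ) * ∑ j, (y j) ^ 2) x (EuclideanSpace.single i 1)
      = (-1/4 : ℝ) * (2 * x i) := by
    rw [fderiv_const_mul ((Differentiable.fun_sum fun j _ => ((coord_contDiff j).differentiable (by simp)).fun_pow 2) x)]
    simp only [ContinuousLinearMap.coe_smul', Pi.smul_apply, smul_eq_mul]
    congr 1
    exact pd_normsq i x
  rw [h2]
  ring

theorem divergence_zero {n : ℕ} (H : Fin (n+1) → (Fin (n+1) → ℝ) → ℝ)
    (hsm : ∀ i, ContDiff ℝ (⊤ : ℕ∞) (H i))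
    (hHi : ∀ i, Integrable (H i))
    (hdiv : Integrable (fun x => ∑ i, fderiv ℝ (H i) x (Pi.single i 1))) :
    ∫ x : Fin (n+1) → ℝ, ∑ i, fderiv ℝ (H i) x (Pi.single i 1) = 0 := by
  classical
  have Hint : ∀ i : Fin (n+1), Integrable
      (fun p : ℝ × (Fin n → ℝ) => H i (Fin.insertNth i p.1 p.2)) := by
    intro i
    have mp := (volume_preserving_piFinSuccAbove (fun _ : Fin (n+1) => ℝ) i).symm
    have emb := (MeasurableEquiv.piFinSuccAbove (fun _ : Fin (n+1) => ℝ) i).symm.measurableEmbedding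
    have := (mp.integrable_comp_emb emb).2 (hHi i)
    simpa [Function.comp_def, Fin.insertNthEquiv, Equiv.coe_fn_mk] using this
  set G : Fin (n+1) → ℝ → ℝ :=
    fun i t => ∫ y : Fin n → ℝ, ‖H i (Fin.insertNth i t y)‖ with hG
  have hGint : ∀ i, Integrable (G i) := fun i => (Hint i).integral_norm_prod_left
  have hslice : ∀ i, ∀ᵐ t : ℝ, Integrable (fun y => H i (Fin.insertNth i t y)) :=
    fun i => (Hint i).prod_right_ae
  have hsliceneg : ∀ i, ∀ᵐ t : ℝ, Integrable (fun y => H i (Fin.insertNth i (-t) y)) := by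
    intro i
    have h := hslice i
    rw [ae_iff] at h ⊢
    have : {t : ℝ | ¬ Integrable (fun y => H i (Fin.insertNth i (-t) y))}
        = Neg.neg ⁻¹' {t : ℝ | ¬ Integrable (fun y => H i (Fin.insertNth i t y))} := rfl
    rw [this, Set.neg_preimage, Measure.measure_neg]
    exact h
  set φ : ℝ → ℝ := fun t => ∑ i, (G i t + G i (-t)) with hφ
  have hφint : Integrable φ := by
    apply integrable_finset_sum
    intro i _
    exact (hGint i).add ((hGint i).comp_neg)
  -- goodness
  have key : ∀ k : ℕ, ∃ R : ℝ, (k:ℝ) < R ∧ φ R < 1/(k+1) ∧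
      (∀ i, Integrable (fun y => H i (Fin.insertNth i R y))) ∧
      (∀ i, Integrable (fun y => H i (Fin.insertNth i (-R) y))) := by
    intro k
    by_contra hcon
    push_neg at hcon
    have hae : ∀ᵐ t ∂(volume.restrict (Ioi (k:ℝ))), 1/((k:ℝ)+1) ≤ φ t := by
      have h1 := ae_restrict_of_ae (μ := volume) (s := Ioi (k:ℝ))
        ((ae_all_iff.2 hslice).and (ae_all_iff.2 hsliceneg))
      filter_upwards [h1, ae_restrict_mem measurableSet_Ioi] with t ht htmem
      by_contra hlt
      push_neg at hlt
      obtain ⟨i, hi⟩ := hcon t htmem hlt ht.1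
      exact hi (ht.2 i)
    have : Integrable (fun _ : ℝ => 1/((k:ℝ)+1)) (volume.restrict (Ioi (k:ℝ))) := by
      apply Integrable.mono' (hφint.restrict (s := Ioi (k:ℝ))) aestronglyMeasurable_const
      filter_upwards [hae] with t ht
      rw [Real.norm_eq_abs, abs_of_nonneg (by positivity)]
      exact ht
    rw [integrable_const_iff] at this
    rcases this with h | h
    · exact absurd h (by positivity)
    · have h' := h.measure_univ_lt_top
      simp [Measure.restrict_apply_univ] at h'
  choose R hRgt hRφ hRsl hRslneg using key
  have hRpos : ∀ k : ℕ, (0:ℝ) ≤ R k := fun k => le_trans (Nat.cast_nonneg k) (hRgt k).le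
  set div : (Fin (n+1) → ℝ) → ℝ := fun x => ∑ i, fderiv ℝ (H i) x (Pi.single i 1) with hdivdef
  have hbox : ∀ k : ℕ,
      (∫ x in Icc (fun _ : Fin (n+1) => -(R k)) (fun _ => R k), div x) =
      ∑ i : Fin (n+1),
        ((∫ y in Icc ((fun _ : Fin (n+1) => -(R k)) ∘ Fin.succAbove i)
            ((fun _ : Fin (n+1) => R k) ∘ Fin.succAbove i), H i (Fin.insertNth i (R k) y)) -
         ∫ y in Icc ((fun _ : Fin (n+1) => -(R k)) ∘ Fin.succAbove i)
            ((fun _ : Fin (n+1) => R k) ∘ Fin.succAbove i), H i (Fin.insertNth i (-(R k)) y)) := by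
    intro k
    exact MeasureTheory.integral_divergence_of_hasFDerivAt_off_countable'
      (fun _ => -(R k)) (fun _ => R k)
      (fun i => by simpa using neg_le_self (hRpos k))
      (fun i x => H i x) (fun i x => fderiv ℝ (H i) x) ∅ countable_empty
      (fun i => ((hsm i).continuous).continuousOn)
      (fun x _ i => ((hsm i).differentiable (by simp)).differentiableAt.hasFDerivAt)
      hdiv.integrableOn
  have hfluxbound : ∀ k : ℕ, ‖∑ i : Fin (n+1),
        ((∫ y in Icc ((fun _ : Fin (n+1) => -(R k)) ∘ Fin.succAbove i)
            ((fun _ : Fin (n+1) => R k) ∘ Fin.succAbove i), H i (Fin.insertNth i (R k) y)) -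
         ∫ y in Icc ((fun _ : Fin (n+1) => -(R k)) ∘ Fin.succAbove i)
            ((fun _ : Fin (n+1) => R k) ∘ Fin.succAbove i), H i (Fin.insertNth i (-(R k)) y))‖
        ≤ 1/((k:ℝ)+1) := by
    intro k
    refine le_trans (norm_sum_le _ _) (le_trans ?_ (hRφ k).le)
    rw [hφ]
    apply Finset.sum_le_sum
    intro i _
    refine le_trans (norm_sub_le _ _) (add_le_add ?_ ?_)
    · refine le_trans (norm_integral_le_integral_norm _) ?_
      exact setIntegral_le_integral (hRsl k i).norm (ae_of_all _ fun y => norm_nonneg _)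
    · refine le_trans (norm_integral_le_integral_norm _) ?_
      exact setIntegral_le_integral (hRslneg k i).norm (ae_of_all _ fun y => norm_nonneg _)
  have hlim1 : Filter.Tendsto
      (fun k : ℕ => ∫ x in Icc (fun _ : Fin (n+1) => -(R k)) (fun _ => R k), div x)
      Filter.atTop (nhds (∫ x, div x)) := by
    have : ∀ k : ℕ, (∫ x in Icc (fun _ : Fin (n+1) => -(R k)) (fun _ => R k), div x)
        = ∫ x, (Icc (fun _ : Fin (n+1) => -(R k)) (fun _ => R k)).indicator div x := by
      intro k
      rw [integral_indicator measurableSet_Icc]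
    simp only [this]
    apply tendsto_integral_of_dominated_convergence (fun x => ‖div x‖)
    · intro k
      exact hdiv.aestronglyMeasurable.indicator measurableSet_Icc
    · exact hdiv.norm
    · intro k
      filter_upwards with x
      exact norm_indicator_le_norm_self _ _
    · filter_upwards with x
      have hx : ∀ᶠ k : ℕ in Filter.atTop,
          x ∈ Icc (fun _ : Fin (n+1) => -(R k)) (fun _ => R k) := by
        filter_upwards [Filter.eventually_ge_atTop ⌈‖x‖⌉₊] with k hk
        have hkx : ‖x‖ ≤ (k:ℝ) := le_trans (Nat.le_ceil _) (Nat.cast_le.2 hk)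
        have hxR : ‖x‖ < R k := lt_of_le_of_lt hkx (hRgt k)
        have hj : ∀ j, |x j| ≤ R k := by
          intro j
          have := norm_le_pi_norm x j
          rw [Real.norm_eq_abs] at this
          exact this.trans hxR.le
        exact ⟨fun j => (abs_le.1 (hj j)).1, fun j => (abs_le.1 (hj j)).2⟩
      refine Filter.Tendsto.congr' ?_ tendsto_const_nhds
      filter_upwards [hx] with k hk
      exact (Set.indicator_of_mem hk div).symm
  have hlim2 : Filter.Tendsto
      (fun k : ℕ => ∫ x in Icc (fun _ : Fin (n+1) => -(R k)) (fun _ => R k), div x)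
      Filter.atTop (nhds 0) := by
    apply squeeze_zero_norm (fun k => le_of_eq_of_le (congrArg _ (hbox k)) (hfluxbound k))
    exact tendsto_one_div_add_atTop_nhds_zero_nat
  exact tendsto_nhds_unique hlim1 hlim2


lemma div_identity {u : En n → ℝ} (hu : ContDiff ℝ (⊤ : ℕ∞) u) (x : En n) :
    ∑ i, pd i (fun y => u y * pd i u y * gw y) x
      = (∑ i, (pd i u x) ^ 2) * gw x + (u x * driftLap u x) * gw x := by
  have hud := hu.differentiable (by simp)
  have hpd : ∀ i : Fin n, Differentiable ℝ (pd i u) :=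
    fun i => (pd_contDiff i hu).differentiable (by simp)
  have hgwd : Differentiable ℝ (gw (n := n)) := gw_contDiff.differentiable (by simp)
  have hterm : ∀ i : Fin n, pd i (fun y => u y * pd i u y * gw y) x
      = (pd i u x * pd i u x + u x * pd i (pd i u) x) * gw x
        + u x * pd i u x * (-(x i / 2) * gw x) := by
    intro i
    rw [pd_mul i (hud.fun_mul (hpd i)) hgwd, pd_mul i hud (hpd i), pd_gw]
  have expand : ∀ i : Fin n,
      (pd i u x * pd i u x + u x * pd i (pd i u) x) * gw x
        + u x * pd i u x * (-(x i / 2) * gw x)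
      = (pd i u x) ^ 2 * gw x + pd i (pd i u) x * (u x * gw x)
        + (x i / 2 * pd i u x) * (-(u x * gw x)) := fun i => by ring
  simp only [hterm, expand]
  rw [Finset.sum_add_distrib, Finset.sum_add_distrib, ← Finset.sum_mul, ← Finset.sum_mul,
    ← Finset.sum_mul]
  unfold driftLap lap
  ring

lemma integrable_transfer {m : ℕ} {F : En m → ℝ} (hF : Integrable F) :
    Integrable (fun y : Fin m → ℝ => F ((EuclideanSpace.equiv (Fin m) ℝ).symm y)) := by
  have mp := (EuclideanSpace.volume_preserving_symm_measurableEquiv_toLp (Fin m)).symm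
  have emb := (MeasurableEquiv.toLp 2 (Fin m → ℝ)).symm.symm.measurableEmbedding
  exact (mp.integrable_comp_emb emb).2 hF

lemma integral_transfer {m : ℕ} (F : En m → ℝ) :
    ∫ y : Fin m → ℝ, F ((EuclideanSpace.equiv (Fin m) ℝ).symm y) = ∫ x : En m, F x := by
  have mp := (EuclideanSpace.volume_preserving_symm_measurableEquiv_toLp (Fin m)).symm
  have emb := (MeasurableEquiv.toLp 2 (Fin m → ℝ)).symm.symm.measurableEmbedding
  exact mp.integral_comp emb F

lemma fderiv_transfer {m : ℕ} (G : En m → ℝ) (y : Fin m → ℝ) (i : Fin m) :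
    fderiv ℝ (fun z => G ((EuclideanSpace.equiv (Fin m) ℝ).symm z)) y (Pi.single i 1)
      = pd i G ((EuclideanSpace.equiv (Fin m) ℝ).symm y) := by
  have h : (fun z => G ((EuclideanSpace.equiv (Fin m) ℝ).symm z))
      = G ∘ (EuclideanSpace.equiv (Fin m) ℝ).symm := rfl
  rw [h, ContinuousLinearEquiv.comp_right_fderiv]
  rfl

lemma key_ibp {u : En n → ℝ} (hu : ContDiff ℝ (⊤ : ℕ∞) u)
    (h1 : Integrable (fun x : En n => (u x) ^ 2 * gw x))
    (h2 : Integrable (fun x : En n => (∑ i, (pd i u x) ^ 2) * gw x))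
    (hL : Integrable (fun x : En n => (u x * driftLap u x) * gw x)) :
    ∫ x : En n, (∑ i, (pd i u x) ^ 2) * gw x
      = - ∫ x : En n, (u x * driftLap u x) * gw x := by
  cases n with
  | zero =>
      have h0 : ∀ x : En 0, driftLap u x = 0 := by
        intro x; unfold driftLap lap; simp
      simp [h0]
  | succ m =>
      set H : Fin (m+1) → En (m+1) → ℝ := fun i => fun y => u y * pd i u y * gw y with hH
      have hsm : ∀ i, ContDiff ℝ (⊤ : ℕ∞) (H i) :=
        fun i => (hu.mul (pd_contDiff i hu)).mul gw_contDiff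
      have hgwpos : ∀ x : En (m+1), 0 < gw x := fun x => Real.exp_pos _
      have hHint : ∀ i, Integrable (H i) := by
        intro i
        apply Integrable.mono' (((h1.add h2).const_mul (1/2)))
          ((hsm i).continuous.aestronglyMeasurable)
        filter_upwards with x
        have hle : (pd i u x) ^ 2 ≤ ∑ j, (pd j u x) ^ 2 :=
          Finset.single_le_sum (f := fun j => (pd j u x) ^ 2) (fun j _ => sq_nonneg _) (Finset.mem_univ i)
        have habs : |u x * pd i u x| ≤ ((u x) ^ 2 + (pd i u x) ^ 2) / 2 := by
          rw [abs_mul]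
          nlinarith [sq_abs (u x), sq_abs (pd i u x), sq_nonneg (|u x| - |pd i u x|),
            abs_nonneg (u x), abs_nonneg (pd i u x)]
        have : ‖H i x‖ = |u x * pd i u x| * gw x := by
          rw [hH]
          simp only [Real.norm_eq_abs, abs_mul, abs_of_pos (hgwpos x)]
        rw [this]
        have := mul_le_mul_of_nonneg_right
          (habs.trans (by linarith : ((u x) ^ 2 + (pd i u x) ^ 2) / 2
            ≤ ((u x) ^ 2 + ∑ j, (pd j u x) ^ 2) / 2)) (hgwpos x).le
        calc |u x * pd i u x| * gw x
            ≤ ((u x) ^ 2 + ∑ j, (pd j u x) ^ 2) / 2 * gw x := this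
          _ = 1/2 * ((u x) ^ 2 * gw x + (∑ j, (pd j u x) ^ 2) * gw x) := by ring
      -- transported family
      set e := (EuclideanSpace.equiv (Fin (m+1)) ℝ).symm with he
      set H' : Fin (m+1) → (Fin (m+1) → ℝ) → ℝ := fun i y => H i (e y) with hH'
      have hsm' : ∀ i, ContDiff ℝ (⊤ : ℕ∞) (H' i) := by
        intro i
        exact (hsm i).comp (EuclideanSpace.equiv (Fin (m+1)) ℝ).symm.contDiff
      have hHint' : ∀ i, Integrable (H' i) := fun i => integrable_transfer (hHint i)
      have hdiveq : ∀ y : Fin (m+1) → ℝ,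
          (∑ i, fderiv ℝ (H' i) y (Pi.single i 1))
            = (∑ i, (pd i u (e y)) ^ 2) * gw (e y) + (u (e y) * driftLap u (e y)) * gw (e y) := by
        intro y
        have : ∀ i, fderiv ℝ (H' i) y (Pi.single i 1) = pd i (H i) (e y) :=
          fun i => fderiv_transfer (H i) y i
        simp only [this]
        exact div_identity hu (e y)
      have hdiv' : Integrable
          (fun y : Fin (m+1) → ℝ => ∑ i, fderiv ℝ (H' i) y (Pi.single i 1)) := by
        have : Integrable (fun x : En (m+1) =>
            (∑ i, (pd i u x) ^ 2) * gw x + (u x * driftLap u x) * gw x) := h2.add hL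
        have h' := integrable_transfer this
        apply h'.congr
        filter_upwards with y
        exact (hdiveq y).symm
      have hzero := divergence_zero H' hsm' hHint' hdiv'
      have : ∫ y : Fin (m+1) → ℝ, (∑ i, fderiv ℝ (H' i) y (Pi.single i 1))
          = ∫ x : En (m+1), ((∑ i, (pd i u x) ^ 2) * gw x + (u x * driftLap u x) * gw x) := by
        rw [integral_congr_ae (Filter.Eventually.of_forall hdiveq)]
        rw [he]
        exact integral_transfer
          (fun x => (∑ i, (pd i u x) ^ 2) * gw x + (u x * driftLap u x) * gw x)
      rw [hzero] at this
      rw [integral_add h2 hL] at this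
      linarith

lemma pd_pd_eq_second (w : En n → ℝ) (hw : ContDiff ℝ (⊤ : ℕ∞) w) (i j : Fin n) (x : En n) :
    pd i (pd j w) x
      = fderiv ℝ (fderiv ℝ w) x (EuclideanSpace.single i 1) (EuclideanSpace.single j 1) := by
  unfold pd
  have hc : DifferentiableAt ℝ (fderiv ℝ w) x :=
    ((hw.fderiv_right (m := (⊤ : ℕ∞)) (by simp)).differentiable (by simp)) x
  have hu : DifferentiableAt ℝ (fun _ : En n => EuclideanSpace.single j (1:ℝ)) x :=
    differentiableAt_const _
  rw [fderiv_clm_apply hc hu]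
  simp

lemma pd_symm (w : En n → ℝ) (hw : ContDiff ℝ (⊤ : ℕ∞) w) (i j : Fin n) (x : En n) :
    pd i (pd j w) x = pd j (pd i w) x := by
  rw [pd_pd_eq_second w hw i j x, pd_pd_eq_second w hw j i x]
  exact (hw.contDiffAt.isSymmSndFDerivAt (by rw [minSmoothness_of_isRCLikeNormedField]; exact WithTop.coe_le_coe.2 le_top)) _ _

lemma pd_sub (i : Fin n) {a b : En n → ℝ} (ha : Differentiable ℝ a) (hb : Differentiable ℝ b)
    (x : En n) : pd i (fun y => a y - b y) x = pd i a x - pd i b x := by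
  unfold pd
  rw [fderiv_fun_sub (ha x) (hb x)]
  rfl

lemma pd_const_mul (i : Fin n) (c : ℝ) {a : En n → ℝ} (ha : Differentiable ℝ a) (x : En n) :
    pd i (fun y => c * a y) x = c * pd i a x := by
  unfold pd
  rw [fderiv_const_mul (ha x)]
  rfl

lemma coord_diff (j : Fin n) : Differentiable ℝ (fun y : En n => y j) :=
  (coord_contDiff j).differentiable (by simp)

lemma drift_commute {v : En n → ℝ} (hv : ContDiff ℝ (⊤ : ℕ∞) v) (i : Fin n) (x : En n) :
    pd i (driftLap v) x = driftLap (pd i v) x - (1/2) * pd i v x := by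
  have hpdv : ∀ j : Fin n, ContDiff ℝ (⊤ : ℕ∞) (pd j v) := fun j => pd_contDiff j hv
  have hFd : ∀ j : Fin n, Differentiable ℝ (fun y : En n => y j / 2 * pd j v y) := by
    intro j
    have h1 : Differentiable ℝ (fun y : En n => y j / 2) := by
      simp only [div_eq_mul_inv]
      exact (coord_diff j).mul_const _
    exact h1.mul ((hpdv j).differentiable (by simp))
  have hdl : driftLap v = fun y => (∑ j, pd j (pd j v) y) - ∑ j, (y j / 2) * pd j v y := by
    funext y; rfl
  rw [hdl]
  have hd1 : Differentiable ℝ (fun y : En n => ∑ j, pd j (pd j v) y) :=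
    Differentiable.fun_sum fun j _ => (pd_contDiff j (hpdv j)).differentiable (by simp)
  have hd2 : Differentiable ℝ (fun y : En n => ∑ j, (y j / 2) * pd j v y) :=
    Differentiable.fun_sum fun j _ => hFd j
  rw [pd_sub i hd1 hd2 x]
  have hA : pd i (fun y => ∑ j, pd j (pd j v) y) x = ∑ j, pd j (pd j (pd i v)) x := by
    rw [pd_sum i Finset.univ (fun j => (pd_contDiff j (hpdv j)).differentiable (by simp)) x]
    apply Finset.sum_congr rfl
    intro j _
    have h1 : pd i (pd j (pd j v)) x = pd j (pd i (pd j v)) x := pd_symm _ (hpdv j) i j x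
    have h2 : pd i (pd j v) = pd j (pd i v) := by
      funext y; exact pd_symm v hv i j y
    rw [h1, h2]
  have hB : pd i (fun y => ∑ j, (y j / 2) * pd j v y) x
      = (1/2) * pd i v x + ∑ j, (x j / 2) * pd j (pd i v) x := by
    rw [pd_sum i Finset.univ hFd x]
    have hterm : ∀ j : Fin n, pd i (fun y => (y j / 2) * pd j v y) x
        = (if i = j then (1/2) * pd j v x else 0) + (x j / 2) * pd j (pd i v) x := by
      intro j
      have hfun : (fun y : En n => (y j / 2) * pd j v y)
          = fun y => (1/2 : ℝ) * ((fun z : En n => z j) y * pd j v y) := by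
        funext y; ring
      rw [hfun, pd_const_mul i (1/2) ((coord_diff j).fun_mul ((hpdv j).differentiable (by simp))) x,
        pd_mul i (coord_diff j) ((hpdv j).differentiable (by simp)) x, pd_coord]
      rw [show pd i (pd j v) = pd j (pd i v) from funext fun y => pd_symm v hv i j y]
      by_cases h : i = j
      · simp [h]; ring
      · simp [h]; ring
    simp only [hterm]
    rw [Finset.sum_add_distrib]
    congr 1
    simp [Finset.sum_ite_eq]
  rw [hA, hB]
  unfold driftLap lap
  ring


/-- For a normalized drift eigenfunction `ℒv = −μv` on the Gaussian soliton with
`v, ∇v, Hess v ∈ L²(e^{-f})`:  `∫|∇v|²e^{-f} = μ` and `∫|Hess v|²e^{-f} = μ(μ − 1/2)`.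
In particular, no such eigenfunction exists for `μ ∈ (0, 1/2)`. -/
theorem stmt_10 (n : ℕ) (μ : ℝ) (v : En n → ℝ) (hv : ContDiff ℝ (⊤ : ℕ∞) v)
    (h1 : Integrable (fun x : En n => (v x) ^ 2 * gw x))
    (h2 : Integrable (fun x : En n => (∑ i, (pd i v x) ^ 2) * gw x))
    (h3 : Integrable (fun x : En n => (∑ i, ∑ j, (hess v x i j) ^ 2) * gw x))
    (heig : ∀ x, driftLap v x = -μ * v x)
    (hnorm : ∫ x : En n, (v x) ^ 2 * gw x = 1) :
    (∫ x : En n, (∑ i, (pd i v x) ^ 2) * gw x = μ) ∧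
    (∫ x : En n, (∑ i, ∑ j, (hess v x i j) ^ 2) * gw x = μ * (μ - 1/2)) ∧
    ¬ (0 < μ ∧ μ < 1/2) := by
  have hgwpos : ∀ x : En n, 0 < gw x := fun x => Real.exp_pos _
  -- Part 1
  have hLfun : (fun x : En n => (v x * driftLap v x) * gw x)
      = fun x => -μ * ((v x) ^ 2 * gw x) := by
    funext x; rw [heig x]; ring
  have hLv : Integrable (fun x : En n => (v x * driftLap v x) * gw x) := by
    rw [hLfun]; exact h1.const_mul _
  have hIBP1 := key_ibp hv h1 h2 hLv
  have hval : ∫ x : En n, (v x * driftLap v x) * gw x = -μ := by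
    rw [hLfun, integral_const_mul, hnorm]; ring
  have part1 : ∫ x : En n, (∑ i, (pd i v x) ^ 2) * gw x = μ := by
    rw [hIBP1, hval]; ring
  -- integrability of pieces
  have h1i : ∀ i : Fin n, Integrable (fun x : En n => (pd i v x) ^ 2 * gw x) := by
    intro i
    apply Integrable.mono' h2 (((pd_contDiff i hv).continuous.pow 2).mul
      gw_contDiff.continuous).aestronglyMeasurable
    filter_upwards with x
    rw [Real.norm_eq_abs, Pi.mul_apply, Pi.pow_apply, abs_of_nonneg (mul_nonneg (sq_nonneg _) (hgwpos x).le)]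
    apply mul_le_mul_of_nonneg_right _ (hgwpos x).le
    exact Finset.single_le_sum (f := fun j => (pd j v x) ^ 2)
      (fun j _ => sq_nonneg _) (Finset.mem_univ i)
  have h2i : ∀ i : Fin n, Integrable (fun x : En n => (∑ j, (pd j (pd i v) x) ^ 2) * gw x) := by
    intro i
    apply Integrable.mono' h3
    · apply Continuous.aestronglyMeasurable
      apply Continuous.mul _ gw_contDiff.continuous
      apply continuous_finset_sum
      intro j _
      exact (pd_contDiff j (pd_contDiff i hv)).continuous.pow 2
    · filter_upwards with x
      rw [Real.norm_eq_abs, abs_of_nonneg (mul_nonneg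
        (Finset.sum_nonneg fun j _ => sq_nonneg _) (hgwpos x).le)]
      apply mul_le_mul_of_nonneg_right _ (hgwpos x).le
      calc ∑ j, (pd j (pd i v) x) ^ 2
          = (fun i' => ∑ j, (hess v x j i') ^ 2) i := rfl
        _ ≤ ∑ i', ∑ j, (hess v x j i') ^ 2 :=
            Finset.single_le_sum (f := fun i' => ∑ j, (hess v x j i') ^ 2)
              (fun i' _ => Finset.sum_nonneg fun j _ => sq_nonneg _) (Finset.mem_univ i)
        _ = ∑ i', ∑ j, (hess v x i' j) ^ 2 := Finset.sum_comm
  have heigi : ∀ (i : Fin n) (x : En n),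
      driftLap (pd i v) x = (1/2 - μ) * pd i v x := by
    intro i x
    have h := drift_commute hv i x
    have hdv : driftLap v = fun y => -μ * v y := funext heig
    rw [hdv, pd_const_mul i (-μ) (hv.differentiable (by simp)) x] at h
    linarith [h]
  have hLi : ∀ i : Fin n,
      Integrable (fun x : En n => (pd i v x * driftLap (pd i v) x) * gw x) := by
    intro i
    have : (fun x : En n => (pd i v x * driftLap (pd i v) x) * gw x)
        = fun x => (1/2 - μ) * ((pd i v x) ^ 2 * gw x) := by
      funext x; rw [heigi i x]; ring
    rw [this]
    exact (h1i i).const_mul _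
  have hIBPi : ∀ i : Fin n,
      ∫ x : En n, (∑ j, (pd j (pd i v) x) ^ 2) * gw x
        = (μ - 1/2) * ∫ x : En n, (pd i v x) ^ 2 * gw x := by
    intro i
    have h := key_ibp (pd_contDiff i hv) (h1i i) (h2i i) (hLi i)
    rw [h]
    have : (fun x : En n => (pd i v x * driftLap (pd i v) x) * gw x)
        = fun x => (1/2 - μ) * ((pd i v x) ^ 2 * gw x) := by
      funext x; rw [heigi i x]; ring
    rw [this, integral_const_mul]
    ring
  have hsum1 : ∑ i, ∫ x : En n, (pd i v x) ^ 2 * gw x = μ := by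
    rw [← integral_finset_sum Finset.univ (fun i _ => h1i i)]
    rw [← part1]
    congr 1
    funext x
    rw [Finset.sum_mul]
  have part2 : ∫ x : En n, (∑ i, ∑ j, (hess v x i j) ^ 2) * gw x = μ * (μ - 1/2) := by
    have hswap : (fun x : En n => (∑ i, ∑ j, (hess v x i j) ^ 2) * gw x)
        = fun x => ∑ i, ((∑ j, (pd j (pd i v) x) ^ 2) * gw x) := by
      funext x
      rw [← Finset.sum_mul]
      congr 1
      rw [Finset.sum_comm]
      rfl
    rw [hswap, integral_finset_sum Finset.univ (fun i _ => h2i i)]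
    rw [Finset.sum_congr rfl (fun i _ => hIBPi i), ← Finset.mul_sum, hsum1]
    ring
  refine ⟨part1, part2, ?_⟩
  rintro ⟨hμ0, hμhalf⟩
  have hnn : 0 ≤ μ * (μ - 1/2) := by
    rw [← part2]
    apply integral_nonneg
    intro x
    have : 0 ≤ ∑ i, ∑ j, (hess v x i j) ^ 2 :=
      Finset.sum_nonneg fun i _ => Finset.sum_nonneg fun j _ => sq_nonneg _
    exact mul_nonneg this (hgwpos x).le
  nlinarith
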